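/- Endogenous tests differ from exogenous tests: for every p ∈ ℙ, the formula ⟨p?ⁿ⟩⊤ → p is valid, whereas its converse p → ⟨p?ⁿ⟩⊤ is not valid; in particular, in the model M = ⟨∅,∅,{p}⟩ one has M ⊨ p but M ⊭ ⟨p?ⁿ⟩⊤. -/

import Mathlib

set_option maxHeartbeats 1000000

/-- Propositional variables. -/
abbrev PVar := ℕ

/-- A DL-PA∥ model: readable variables `R`, writable variables `W`,
valuation `V`, with writability implying readability. -/
@[ext]
structure Model where
  R : Set PVar
  W : Set PVar
  V : Set PVar
  sub : W ⊆ R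

mutual
/-- Formulas of DL-PA∥. -/
inductive Formula : Type where
  | atom : PVar → Formula
  | top  : Formula
  | neg  : Formula → Formula
  | or   : Formula → Formula → Formula
  | dia  : Program → Formula → Formula
/-- Programs of DL-PA∥. -/
inductive Program : Type where
  | assignT : PVar → Program   -- +p
  | assignF : PVar → Program   -- −p
  | addR : PVar → Program      -- +r p
  | remR : PVar → Program      -- −r p
  | addW : PVar → Program      -- +w p
  | remW : PVar → Program      -- −w p
  | testEx : Formula → Program -- exogenous test φ?
  | testEn : Formula → Program -- endogenous test φ?ⁿ
  | seq : Program → Program → Program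
  | choice : Program → Program → Program
  | star : Program → Program
  | par : Program → Program → Program
end

/-- RW-disjointness. -/
def RWdisjoint (M1 M2 : Model) : Prop :=
  M1.W ∩ M2.R = ∅ ∧ M2.W ∩ M1.R = ∅

/-- Split relation `M ◁ (M₁,M₂)`. -/
def SplitRel (M M1 M2 : Model) : Prop :=
  RWdisjoint M1 M2 ∧ M.R = M1.R ∪ M2.R ∧ M.W = M1.W ∪ M2.W ∧ M.V = M1.V ∧ M.V = M2.V

/-- Merge relation `M ▷ (M₁,M₂)`. -/
def MergeRel (M M1 M2 : Model) : Prop :=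
  RWdisjoint M1 M2 ∧ M.R = M1.R ∪ M2.R ∧ M.W = M1.W ∪ M2.W ∧
  M1.V \ M.W = M2.V \ M.W ∧ M.V = (M1.V ∩ M1.W) ∪ (M2.V ∩ M2.W) ∪ (M1.V ∩ M2.V)

/-- Indistinguishability `M ∼ M'`. -/
def Indist (M M' : Model) : Prop :=
  M.R = M'.R ∧ M.W = M'.W ∧ M.V ∩ M.R = M'.V ∩ M'.R

mutual
/-- Truth of a formula in a model. -/
def Sat : Model → Formula → Prop
  | M, .atom p => p ∈ M.V
  | _, .top => True
  | M, .neg φ => ¬ Sat M φ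
  | M, .or φ ψ => Sat M φ ∨ Sat M ψ
  | M, .dia π φ => ∃ M', Interp π M M' ∧ Sat M' φ
/-- Interpretation of programs as relations between models. -/
def Interp : Program → Model → Model → Prop
  | .assignT p, M, M' => M'.R = M.R ∧ M'.W = M.W ∧ M'.V = M.V ∪ {p} ∧ p ∈ M.W
  | .assignF p, M, M' => M'.R = M.R ∧ M'.W = M.W ∧ M'.V = M.V \ {p} ∧ p ∈ M.W
  | .addR p, M, M' => M'.R = M.R ∪ {p} ∧ M'.W = M.W ∧ M'.V = M.V
  | .remR p, M, M' => M'.R = M.R \ {p} ∧ M'.W = M.W \ {p} ∧ M'.V = M.V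
  | .addW p, M, M' => M'.R = M.R ∪ {p} ∧ M'.W = M.W ∪ {p} ∧ M'.V = M.V
  | .remW p, M, M' => M'.R = M.R ∧ M'.W = M.W \ {p} ∧ M'.V = M.V
  | .testEx φ, M, M' => M = M' ∧ Sat M φ
  | .testEn φ, M, M' => M = M' ∧ ∀ M'', Indist M'' M → Sat M'' φ
  | .seq π1 π2, M, M' => ∃ M'', Interp π1 M M'' ∧ Interp π2 M'' M'
  | .choice π1 π2, M, M' => Interp π1 M M' ∨ Interp π2 M M'
  | .star π, M, M' => Relation.ReflTransGen (fun A B => Interp π A B) M M'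
  | .par π1 π2, M, M' => ∃ M1 M2 M1' M2',
      SplitRel M M1 M2 ∧ MergeRel M' M1' M2' ∧
      Interp π1 M1 M1' ∧ Interp π2 M2 M2' ∧
      M1.R = M1'.R ∧ M1.W = M1'.W ∧ M1.V \ M1.W = M1'.V \ M1'.W ∧
      M2.R = M2'.R ∧ M2.W = M2'.W ∧ M2.V \ M2.W = M2'.V \ M2'.W
end

mutual
/-- Propositional variables occurring in a formula. -/
def varsF : Formula → Finset PVar
  | .atom p => {p}
  | .top => ∅
  | .neg φ => varsF φ
  | .or φ ψ => varsF φ ∪ varsF ψ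
  | .dia π φ => varsP π ∪ varsF φ
/-- Propositional variables occurring in a program. -/
def varsP : Program → Finset PVar
  | .assignT p => {p}
  | .assignF p => {p}
  | .addR p => {p}
  | .remR p => {p}
  | .addW p => {p}
  | .remW p => {p}
  | .testEx φ => varsF φ
  | .testEn φ => varsF φ
  | .seq π1 π2 => varsP π1 ∪ varsP π2
  | .choice π1 π2 => varsP π1 ∪ varsP π2
  | .star π => varsP π
  | .par π1 π2 => varsP π1 ∪ varsP π2
end

/-- `⊥`. -/
def botF : Formula := .neg .top
/-- Conjunction. -/
def andF (φ ψ : Formula) : Formula := .neg (.or (.neg φ) (.neg ψ))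
/-- Implication. -/
def impF (φ ψ : Formula) : Formula := .or (.neg φ) ψ
/-- Bi-implication. -/
def iffF (φ ψ : Formula) : Formula := andF (impF φ ψ) (impF ψ φ)
/-- `[π]φ`. -/
def boxF (π : Program) (φ : Formula) : Formula := .neg (.dia π (.neg φ))
/-- `w(p)`: `p` is writable. -/
def wF (p : PVar) : Formula := .dia (.assignT p) .top
/-- `r(p)`: `p` is readable. -/
def rF (p : PVar) : Formula :=
  .or (.dia (.testEn (.atom p)) .top) (.dia (.testEn (.neg (.atom p))) .top)

/-- Restriction `M ∩ P` of a model to a set of variables. -/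
def interModel (M : Model) (P : Set PVar) : Model :=
  ⟨M.R ∩ P, M.W ∩ P, M.V ∩ P, Set.inter_subset_inter M.sub (subset_refl P)⟩

/-- A formula is valid iff true in every model. -/
def Valid (φ : Formula) : Prop := ∀ M : Model, Sat M φ

theorem Indist.refl (M : Model) : Indist M M :=
  ⟨rfl, rfl, rfl⟩

theorem sat_impF {M : Model} {φ ψ : Formula} : Sat M (impF φ ψ) ↔ (Sat M φ → Sat M ψ) := by
  simp only [impF, Sat, imp_iff_not_or]

theorem sat_dia_testEn_top {M : Model} {φ : Formula} :
    Sat M (.dia (.testEn φ) .top) ↔ ∀ M', Indist M' M → Sat M' φ := by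
  simp only [Sat, Interp, and_true, exists_eq_left']

theorem Sat.of_dia_testEn {M : Model} {φ : Formula} (h : Sat M (.dia (.testEn φ) .top)) :
    Sat M φ :=
  sat_dia_testEn_top.mp h M (Indist.refl M)

/-- Removing an unreadable `p` from the valuation yields an indistinguishable model refuting `p`. -/
theorem not_sat_dia_testEn_atom_of_not_mem_R {M : Model} {p : PVar} (hp : p ∉ M.R) :
    ¬ Sat M (.dia (.testEn (.atom p)) .top) := by
  intro h
  have hind : Indist ⟨M.R, M.W, M.V \ {p}, M.sub⟩ M := by
    refine ⟨rfl, rfl, ?_⟩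
    ext q
    constructor
    · exact fun ⟨hqV, hqR⟩ => ⟨hqV.1, hqR⟩
    · exact fun ⟨hqV, hqR⟩ => ⟨⟨hqV, fun hq => hp (hq ▸ hqR)⟩, hqR⟩
  exact (sat_dia_testEn_top.mp h _ hind : p ∈ M.V \ {p}).2 rfl

/-- Endogenous tests differ from exogenous tests: `⟨p?ⁿ⟩⊤ → p`
is valid, its converse `p → ⟨p?ⁿ⟩⊤` is not valid, and in the model
`⟨∅,∅,{p}⟩` one has `M ⊨ p` but `M ⊭ ⟨p?ⁿ⟩⊤`. -/
theorem endogenous_vs_exogenous (p : PVar) :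
    (∀ M : Model, Sat M (impF (.dia (.testEn (.atom p)) .top) (.atom p))) ∧
    ¬ (∀ M : Model, Sat M (impF (.atom p) (.dia (.testEn (.atom p)) .top))) ∧
    (Sat ⟨∅, ∅, {p}, Set.Subset.refl ∅⟩ (.atom p) ∧
     ¬ Sat ⟨∅, ∅, {p}, Set.Subset.refl ∅⟩ (.dia (.testEn (.atom p)) .top)) := by
  have hsat : Sat ⟨∅, ∅, {p}, Set.Subset.refl ∅⟩ (.atom p) := rfl
  have hrefute : ¬ Sat ⟨∅, ∅, {p}, Set.Subset.refl ∅⟩ (.dia (.testEn (.atom p)) .top) :=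
    not_sat_dia_testEn_atom_of_not_mem_R (Set.notMem_empty p)
  refine ⟨fun M => sat_impF.mpr Sat.of_dia_testEn, fun hvalid => ?_, hsat, hrefute⟩
  exact hrefute (sat_impF.mp (hvalid _) hsat)
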